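/- arXiv:1706.08447 — 3 statements merged into one kernel-verified Lean document; each statement's English description precedes it below -/
import Mathlib

section
/- Let F_q be a finite field of characteristic p and let f ∈ F_q[X] with nonzero formal derivative (i.e. f ∉ F_q[X^p]) and deg(f) ≥ 8. If f is universal, then f is indecomposable: there do not exist polynomials g, h ∈ F_q[X], each of degree strictly greater than 1 and strictly less than deg(f), such that f = g ∘ h (composition of polynomials). -/
/-!
Write `n = deg g · deg h` and pick, by Bertrand's postulate, a prime `ℓ` with
`max (deg g) (deg h) < ℓ ≤ n`. Universality gives a field `K ⊇ F` and an irreducible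
`P ∈ K[X]` of degree `ℓ` dividing `g ∘ h - t₀`. In `L = K[X]/(P) = K(x)`, of degree `ℓ` over `K`,
the element `β = h(x)` is a root of `g - t₀`, so its degree over `K` divides `ℓ` and is
less than `ℓ`; hence `β = b ∈ K`, and then `P ∣ h - b`, which is impossible as `deg h < ℓ`.
-/

open Polynomial

/-- `f ∈ F_q[X]` is `d`-universal if for every positive `ℓ ≤ deg f` there is
`t₀ ∈ F_{q^d}` such that `f - t₀` has an irreducible factor of degree `ℓ` over `F_{q^d}`. -/
def IsDUniversal {F : Type} [Field F] [Fintype F] (f : Polynomial F) (d : ℕ) : Prop :=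
  ∀ (K : Type) [Field K] [Fintype K] [Algebra F K],
    Fintype.card K = Fintype.card F ^ d →
    ∀ ℓ : ℕ, 0 < ℓ → ℓ ≤ f.natDegree →
      ∃ t₀ : K, ∃ g : Polynomial K,
        Irreducible g ∧ g.natDegree = ℓ ∧ g ∣ (f.map (algebraMap F K) - C t₀)

/-- `f` is universal if it is `d`-universal for some positive integer `d`. -/
def IsUniversal {F : Type} [Field F] [Fintype F] (f : Polynomial F) : Prop :=
  ∃ d : ℕ, 0 < d ∧ IsDUniversal f d

theorem FiniteField.exists_algebra_card_eq_pow (F : Type) [Field F] [Fintype F] {d : ℕ}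
    (hd : 0 < d) :
    ∃ (K : Type) (_ : Field K) (_ : Fintype K) (_ : Algebra F K),
      Fintype.card K = Fintype.card F ^ d := by
  obtain ⟨p, _⟩ := CharP.exists F
  have : Fact p.Prime := ⟨CharP.char_is_prime F p⟩
  have : NeZero d := ⟨hd.ne'⟩
  refine ⟨Extension F p d, inferInstance, Fintype.ofFinite _, inferInstance, ?_⟩
  simp only [Fintype.card_eq_nat_card, natCard_extension]

theorem Nat.exists_prime_gt_max_le_mul {a b : ℕ} (ha : 2 ≤ a) (hb : 2 ≤ b) :
    ∃ ℓ, ℓ.Prime ∧ a < ℓ ∧ b < ℓ ∧ ℓ ≤ a * b := by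
  obtain ⟨ℓ, hℓ, hlt, hle⟩ := Nat.exists_prime_lt_and_le_two_mul (max a b) (by omega)
  refine ⟨ℓ, hℓ, lt_of_le_of_lt (le_max_left _ _) hlt, lt_of_le_of_lt (le_max_right _ _) hlt,
    hle.trans ?_⟩
  rcases le_total a b with hab | hab
  · rw [max_eq_right hab]; exact Nat.mul_le_mul_right b ha
  · rw [max_eq_left hab, mul_comm]; exact Nat.mul_le_mul_left a hb

theorem Polynomial.natDegree_minpoly_eq_one_of_finrank_prime {K L : Type*} [Field K] [Field L]
    [Algebra K L] [FiniteDimensional K L] (hprime : (Module.finrank K L).Prime)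
    {β : L} {q : K[X]} (hq : q ≠ 0) (hroot : aeval β q = 0)
    (hdeg : q.natDegree < Module.finrank K L) :
    (minpoly K β).natDegree = 1 := by
  have hle : (minpoly K β).natDegree ≤ q.natDegree :=
    natDegree_le_of_dvd (minpoly.dvd K β hroot) hq
  rcases hprime.eq_one_or_self_of_dvd _ (minpoly.degree_dvd (IsIntegral.of_finite K β)) with h | h
  · exact h
  · omega

theorem Polynomial.natDegree_le_of_dvd_comp_sub_C {K : Type*} [Field K] {P g h : K[X]} {c : K}
    (hP : Irreducible P) (hprime : P.natDegree.Prime) (hdvd : P ∣ g.comp h - C c)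
    (hg0 : 0 < g.natDegree) (hg : g.natDegree < P.natDegree) (hh0 : 0 < h.natDegree) :
    P.natDegree ≤ h.natDegree := by
  have : Fact (Irreducible P) := ⟨hP⟩
  have hP0 : P ≠ 0 := hP.ne_zero
  let pb := AdjoinRoot.powerBasis hP0
  have : FiniteDimensional K (AdjoinRoot P) := pb.finite
  have hfinrank : Module.finrank K (AdjoinRoot P) = P.natDegree := by
    rw [pb.finrank, AdjoinRoot.powerBasis_dim]
  have hroot : aeval (AdjoinRoot.mk P h) (g - C c) = 0 := by
    rw [show aeval (AdjoinRoot.mk P h) (g - C c) = AdjoinRoot.mk P ((g - C c).comp h) from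
      aeval_algHom_apply (AdjoinRoot.mkₐ P) h _, AdjoinRoot.mk_eq_zero, sub_comp, C_comp]
    exact hdvd
  have hgc : g - C c ≠ 0 := ne_zero_of_natDegree_gt (n := 0) (by rwa [natDegree_sub_C])
  obtain ⟨b, hb⟩ := minpoly.natDegree_eq_one_iff.mp <|
    natDegree_minpoly_eq_one_of_finrank_prime (hfinrank ▸ hprime) hgc hroot
      (by rwa [natDegree_sub_C, hfinrank])
  have hPh : P ∣ h - C b := by
    rw [← AdjoinRoot.mk_eq_zero, map_sub, AdjoinRoot.mk_C, ← hb, AdjoinRoot.algebraMap_eq,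
      sub_self]
  have hhb : h - C b ≠ 0 := ne_zero_of_natDegree_gt (n := 0) (by rwa [natDegree_sub_C])
  simpa only [natDegree_sub_C] using natDegree_le_of_dvd hPh hhb

theorem stmt_3_general (F : Type) [Field F] [Fintype F] (f : Polynomial F)
    (huniv : IsUniversal f) :
    ¬ ∃ g h : Polynomial F,
        1 < g.natDegree ∧ g.natDegree < f.natDegree ∧
        1 < h.natDegree ∧ h.natDegree < f.natDegree ∧
        f = g.comp h := by
  rintro ⟨g, h, hg1, -, hh1, -, rfl⟩
  obtain ⟨d, hd, huniv⟩ := huniv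
  obtain ⟨K, _, _, _, hcard⟩ := FiniteField.exists_algebra_card_eq_pow F hd
  obtain ⟨ℓ, hℓ, hgℓ, hhℓ, hℓn⟩ := Nat.exists_prime_gt_max_le_mul hg1 hh1
  obtain ⟨t₀, P, hP, rfl, hdvd⟩ := huniv K hcard ℓ hℓ.pos (by rwa [natDegree_comp])
  rw [map_comp] at hdvd
  have := natDegree_le_of_dvd_comp_sub_C hP hℓ hdvd (by rw [natDegree_map]; omega)
    (by rwa [natDegree_map]) (by rw [natDegree_map]; omega)
  rw [natDegree_map] at this
  omega

/-- **Corollary 3.5.** A universal polynomial (separable, of degree `≥ 8`) is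
indecomposable: it is not a composition of two polynomials of strictly smaller degree
(each of degree `> 1`). -/
theorem stmt_3 (F : Type) [Field F] [Fintype F] (f : Polynomial F)
    (hf : f.derivative ≠ 0) (hn : 8 ≤ f.natDegree) (huniv : IsUniversal f) :
    ¬ ∃ g h : Polynomial F,
        1 < g.natDegree ∧ g.natDegree < f.natDegree ∧
        1 < h.natDegree ∧ h.natDegree < f.natDegree ∧
        f = g.comp h :=
  stmt_3_general F f huniv
end

section
/- Let n be a positive integer and let G be a subgroup of the symmetric group S_n acting on a set U of n elements. Suppose that G acts transitively on U and that G contains a permutation which is a cycle of prime order r with r > n/2. Then G acts primitively on U, i.e. G preserves no nontrivial partition of U (every G-invariant block of the action is a singleton or all of U). -/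
/-!
A block `B` with at least two points has at most `n / 2 < r` translates, so its stabilizer has
index less than `r`; a subgroup of index less than a prime `r` contains every element of order
`r`, hence the `r`-cycle `σ` stabilizes every translate of `B`. The translate through a point
moved by `σ` then contains the whole support of `σ`, so `|B| ≥ r > n / 2`, and since `|B|`
divides `n`, `B` is everything.
-/

open Pointwise MulAction

theorem Subgroup.mem_of_index_lt_orderOf {G : Type*} [Group G] {H : Subgroup G} {g : G}
    (hg : (orderOf g).Prime) (h0 : H.index ≠ 0) (hlt : H.index < orderOf g) : g ∈ H := by
  have hle : H.relIndex (zpowers g) ≤ H.index := by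
    simpa using relIndex_le_of_le_right le_top (H.relIndex_top_right ▸ h0)
  have hdvd : H.relIndex (zpowers g) ∣ orderOf g :=
    Nat.card_zpowers g ▸ H.relIndex_dvd_card (zpowers g)
  have hone : H.relIndex (zpowers g) = 1 :=
    (hg.eq_one_or_self_of_dvd _ hdvd).resolve_right (by omega)
  exact Subgroup.zpowers_le.1 (Subgroup.relIndex_eq_one.1 hone)

theorem MulAction.IsBlock.mem_stabilizer_of_card_lt_two_mul_orderOf {G X : Type*} [Group G]
    [MulAction G X] [IsPretransitive G X] [Finite X] {B : Set X} (hB : IsBlock G B)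
    (hB2 : 1 < B.ncard) {g : G} (hg : (orderOf g).Prime) (hX : Nat.card X < 2 * orderOf g) :
    g ∈ stabilizer G B := by
  have hcard := hB.ncard_block_mul_ncard_orbit_eq (Set.nonempty_of_ncard_ne_zero (by omega))
  apply Subgroup.mem_of_index_lt_orderOf hg <;> rw [index_stabilizer]
  · exact Set.ncard_ne_zero_of_mem (mem_orbit_self B)
  · nlinarith

theorem Equiv.Perm.IsCycle.support_subset_of_mem_stabilizer {α : Type*} [DecidableEq α]
    [Fintype α] {σ : Equiv.Perm α} (hσ : σ.IsCycle) {C : Set α} (hC : σ ∈ stabilizer _ C)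
    {x : α} (hxC : x ∈ C) (hx : x ∈ σ.support) : (σ.support : Set α) ⊆ C := by
  intro y hy
  obtain ⟨i, rfl⟩ := hσ.sameCycle (mem_support.1 hx) (mem_support.1 hy)
  rw [← (zpow_mem hC i : σ ^ i • C = C)]
  exact Set.smul_mem_smul_set hxC

theorem stmt_9_general (n r : ℕ)
    (U : Type) [Fintype U] (hU : Fintype.card U = n)
    (G : Subgroup (Equiv.Perm U))
    (htrans : MulAction.IsPretransitive G U)
    (hr : r.Prime) (hrn : n < 2 * r)
    (hcycle : ∃ σ : Equiv.Perm U, σ ∈ G ∧ σ.IsCycle ∧ orderOf σ = r) :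
    ∀ B : Set U, MulAction.IsBlock G B → B.Subsingleton ∨ B = Set.univ := by
  classical
  intro B hB
  refine or_iff_not_imp_left.2 fun hBs => ?_
  have hBnt : B.Nontrivial := Set.not_subsingleton_iff.1 hBs
  obtain ⟨σ, hσG, hσ, rfl⟩ := hcycle
  obtain ⟨x, hx⟩ := hσ.nonempty_support
  obtain ⟨a, ha⟩ := hBnt.nonempty
  obtain ⟨g, rfl⟩ := htrans.exists_smul_eq a x
  have hB2 : 1 < (g • B).ncard := by
    rwa [Set.ncard_smul_set, Set.one_lt_ncard_iff_nontrivial]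
  have hstab : (⟨σ, hσG⟩ : G) ∈ stabilizer G (g • B) :=
    (hB.translate g).mem_stabilizer_of_card_lt_two_mul_orderOf hB2
      (by rwa [Subgroup.orderOf_mk]) (by rwa [Subgroup.orderOf_mk, Nat.card_eq_fintype_card, hU])
  have hsupp : (σ.support : Set U) ⊆ g • B :=
    hσ.support_subset_of_mem_stabilizer hstab (Set.smul_mem_smul_set ha) hx
  have hrB : orderOf σ ≤ B.ncard := by
    rw [hσ.orderOf]
    simpa only [Set.ncard_coe_finset, Set.ncard_smul_set] using Set.ncard_le_ncard hsupp
  apply hB.eq_univ_of_card_lt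
  rw [Nat.card_eq_fintype_card, hU]
  omega

/-- **Lemma 2.5.** Let `G ≤ S_n` act transitively on a set `U` of `n` elements and
suppose `G` contains a cycle of prime order `r` with `r > n/2`. Then `G` acts primitively
on `U`: every `G`-block is a subsingleton (empty or a singleton) or all of `U`. -/
theorem stmt_9 (n r : ℕ) (hn : 0 < n)
    (U : Type) [Fintype U] [DecidableEq U] (hU : Fintype.card U = n)
    (G : Subgroup (Equiv.Perm U))
    (htrans : MulAction.IsPretransitive G U)
    (hr : r.Prime) (hrn : n < 2 * r)
    (hcycle : ∃ σ : Equiv.Perm U, σ ∈ G ∧ σ.IsCycle ∧ orderOf σ = r) :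
    ∀ B : Set U, MulAction.IsBlock G B → B.Subsingleton ∨ B = Set.univ :=
  stmt_9_general n r U hU G htrans hr hrn hcycle
end

section
/- Let q be a power of an odd prime, let K = F_q(x) be the rational function field over F_q in the variable x, and set t = x^q + x^2 ∈ K. Let L be the splitting field over K of the polynomial Y^{q−1} + Y + 2x ∈ K[Y]. Then the polynomial X^q + X^2 − t ∈ K[X] splits completely into linear factors over L. In particular, L is the splitting field of X^q + X^2 − t over F_q(t). -/
/-!
In characteristic `p` with `q = p ^ a`, the Frobenius identity `(X - x) ^ q = X ^ q - x ^ q` gives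
`X ^ q + X ^ 2 - (x ^ q + x ^ 2) = (X - x) * g (X - x)` with `g = Y ^ (q - 1) + Y + 2x`.
So the roots of `X ^ q + X ^ 2 - t` in the splitting field `L` of `g` are `x` and the `x + y` for
the roots `y` of `g`: they split over `L`, and over `F_q(t)` they generate `x`, hence
`F_q(t)(x) = F_q(x)`, hence every root of `g`, hence `L`.
-/

open Polynomial
open scoped IntermediateField

namespace Polynomial

theorem X_pow_add_X_sq_sub_C_eq_mul_comp {R : Type*} [CommRing R] (p : ℕ) [ExpChar R p]
    (n : ℕ) (c : R) :
    (X ^ p ^ n + X ^ 2 - C (c ^ p ^ n + c ^ 2) : R[X]) =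
      (X - C c) * (X ^ (p ^ n - 1) + X + C (2 * c)).comp (X - C c) := by
  have hq : p ^ n - 1 + 1 = p ^ n := Nat.sub_add_cancel (pow_pos (expChar_pos R p) n)
  have hfrob : (X - C c) * (X - C c) ^ (p ^ n - 1) = X ^ p ^ n - C c ^ p ^ n := by
    rw [← pow_succ', hq, sub_pow_expChar_pow]
  rw [add_comp, add_comp, X_pow_comp, X_comp, C_comp, mul_add, mul_add, hfrob, C_add, C_mul,
    C_ofNat, C_pow, C_pow]
  ring

theorem X_pow_add_X_sq_sub_C_ne_zero {R : Type*} [CommRing R] [Nontrivial R] {q : ℕ}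
    (hq : q ≠ 2) (c : R) : (X ^ q + X ^ 2 - C c : R[X]) ≠ 0 := by
  intro h
  simpa [coeff_X_pow, Ne.symm hq] using congrArg (coeff · 2) h

theorem IsSplittingField.of_map_eq_X_sub_C_mul_comp {k K L : Type*} [Field k] [Field K] [Field L]
    [Algebra k K] [Algebra K L] [Algebra k L] [IsScalarTower k K L] {x : K} (hx : k⟮x⟯ = ⊤)
    (g : K[X]) [IsSplittingField K L g] {f : k[X]} (hf0 : f ≠ 0)
    (hf : f.map (algebraMap k K) = (X - C x) * g.comp (X - C x)) : IsSplittingField k L f := by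
  set x' := algebraMap K L x
  have hfL : f.map (algebraMap k L) = (X - C x') * (g.map (algebraMap K L)).comp (X - C x') := by
    rw [IsScalarTower.algebraMap_eq k K L, ← map_map, hf]
    simp [map_comp, x']
  set E := IntermediateField.adjoin k (f.rootSet L)
  have hroot_mem : ∀ z, (f.map (algebraMap k L)).eval z = 0 → z ∈ E := fun z hz ↦
    IntermediateField.subset_adjoin _ _
      (mem_rootSet'.mpr ⟨map_ne_zero hf0, by rwa [aeval_def, ← eval_map]⟩)
  have hxE : x' ∈ E := hroot_mem x' (by simp [hfL])
  have hgE : g.rootSet L ⊆ E := fun y hy ↦ by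
    have hgy : (g.map (algebraMap K L)).eval y = 0 := by
      rw [eval_map, ← aeval_def]; exact (mem_rootSet'.mp hy).2
    simpa using sub_mem (hroot_mem (x' + y) (by simp [hfL, hgy])) hxE
  have hKE : ∀ z : K, algebraMap K L z ∈ E := by
    have hle : k⟮x⟯ ≤ E.comap (IsScalarTower.toAlgHom k K L) :=
      IntermediateField.adjoin_simple_le_iff.mpr hxE
    exact fun z ↦ hle (hx ▸ IntermediateField.mem_top)
  refine isSplittingField_iff_intermediateField.mpr ⟨?_, ?_⟩
  · rw [hfL]
    exact (Splits.X_sub_C _).mul ((IsSplittingField.splits L g).comp_X_sub_C _)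
  · refine eq_top_iff.mpr fun z _ ↦ ?_
    have hz : z ∈ Algebra.adjoin K (g.rootSet L) :=
      (IsSplittingField.adjoin_rootSet L g).symm ▸ Algebra.mem_top
    exact Algebra.adjoin_le (S := (E.toSubfield.toIntermediateField hKE).toSubalgebra) hgE hz

end Polynomial

theorem stmt_11_general (p a : ℕ) [Fact p.Prime] (hodd : Odd p)
    (F : Type) [Field F] [Fintype F] (hF : Fintype.card F = p ^ a) :
    Polynomial.Splits
      (Polynomial.map
        (algebraMap (RatFunc F)
          ((X ^ (p ^ a - 1) + X + C (2 * RatFunc.X) : Polynomial (RatFunc F)).SplittingField))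
        (X ^ p ^ a + X ^ 2 - C (RatFunc.X ^ p ^ a + RatFunc.X ^ 2))) ∧
    (letI : Algebra (↥F⟮(RatFunc.X ^ p ^ a + RatFunc.X ^ 2 : RatFunc F)⟯)
        ((X ^ (p ^ a - 1) + X + C (2 * RatFunc.X) : Polynomial (RatFunc F)).SplittingField) :=
      ((algebraMap (RatFunc F)
          ((X ^ (p ^ a - 1) + X + C (2 * RatFunc.X) :
            Polynomial (RatFunc F)).SplittingField)).comp
        (algebraMap (↥F⟮(RatFunc.X ^ p ^ a + RatFunc.X ^ 2 : RatFunc F)⟯)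
          (RatFunc F))).toAlgebra
    Polynomial.IsSplittingField (↥F⟮(RatFunc.X ^ p ^ a + RatFunc.X ^ 2 : RatFunc F)⟯)
      ((X ^ (p ^ a - 1) + X + C (2 * RatFunc.X) : Polynomial (RatFunc F)).SplittingField)
      (X ^ p ^ a + X ^ 2 -
        C (⟨RatFunc.X ^ p ^ a + RatFunc.X ^ 2,
            IntermediateField.mem_adjoin_simple_self F
              (RatFunc.X ^ p ^ a + RatFunc.X ^ 2)⟩ :
          ↥F⟮(RatFunc.X ^ p ^ a + RatFunc.X ^ 2 : RatFunc F)⟯))) := by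
  have : CharP F p := charP_of_card_eq_prime_pow hF
  have hq : p ^ a ≠ 2 := fun h ↦ absurd (hodd.pow (n := a)) (by rw [h]; decide)
  set K := RatFunc F
  set x : K := RatFunc.X
  set L := (X ^ (p ^ a - 1) + X + C (2 * x) : K[X]).SplittingField
  set k := F⟮x ^ p ^ a + x ^ 2⟯
  let : Algebra k L := ((algebraMap K L).comp (algebraMap k K)).toAlgebra
  -- `k` already acts on `L` through `K`; the tower is stated for the `SMul` of the new algebra.
  have : @IsScalarTower k K L Algebra.toSMul Algebra.toSMul Algebra.toSMul :=
    .of_algebraMap_eq' rfl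
  set f : k[X] :=
    X ^ p ^ a + X ^ 2 - C ⟨x ^ p ^ a + x ^ 2, IntermediateField.mem_adjoin_simple_self F _⟩
  have hfK : f.map (algebraMap k K) = X ^ p ^ a + X ^ 2 - C (x ^ p ^ a + x ^ 2) := by
    simp [f]
  have hsplit : IsSplittingField k L f :=
    .of_map_eq_X_sub_C_mul_comp (RatFunc.IntermediateField.adjoin_X k) _
      (X_pow_add_X_sq_sub_C_ne_zero hq _) (hfK.trans (X_pow_add_X_sq_sub_C_eq_mul_comp p a x))
  refine ⟨?_, hsplit⟩
  simpa only [IsScalarTower.algebraMap_eq k K L, ← map_map, hfK] using hsplit.splits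

/-- **Splitting field description in Proposition 4.2.** Let `q` be a power of an odd
prime, `K = F_q(x)`, `t = x^q + x^2 ∈ K`, and let `L` be the splitting field of
`Y^(q-1) + Y + 2x` over `K`. Then `X^q + X^2 - t` splits completely over `L`; in
particular `L` is the splitting field of `X^q + X^2 - t` over `F_q(t)`. -/
theorem stmt_11 (p a : ℕ) [Fact p.Prime] (hodd : Odd p) (ha : 0 < a)
    (F : Type) [Field F] [Fintype F] (hF : Fintype.card F = p ^ a) :
    Polynomial.Splits
      (Polynomial.map
        (algebraMap (RatFunc F)
          ((X ^ (p ^ a - 1) + X + C (2 * RatFunc.X) : Polynomial (RatFunc F)).SplittingField))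
        (X ^ p ^ a + X ^ 2 - C (RatFunc.X ^ p ^ a + RatFunc.X ^ 2))) ∧
    (letI : Algebra (↥F⟮(RatFunc.X ^ p ^ a + RatFunc.X ^ 2 : RatFunc F)⟯)
        ((X ^ (p ^ a - 1) + X + C (2 * RatFunc.X) : Polynomial (RatFunc F)).SplittingField) :=
      ((algebraMap (RatFunc F)
          ((X ^ (p ^ a - 1) + X + C (2 * RatFunc.X) :
            Polynomial (RatFunc F)).SplittingField)).comp
        (algebraMap (↥F⟮(RatFunc.X ^ p ^ a + RatFunc.X ^ 2 : RatFunc F)⟯)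
          (RatFunc F))).toAlgebra
    Polynomial.IsSplittingField (↥F⟮(RatFunc.X ^ p ^ a + RatFunc.X ^ 2 : RatFunc F)⟯)
      ((X ^ (p ^ a - 1) + X + C (2 * RatFunc.X) : Polynomial (RatFunc F)).SplittingField)
      (X ^ p ^ a + X ^ 2 -
        C (⟨RatFunc.X ^ p ^ a + RatFunc.X ^ 2,
            IntermediateField.mem_adjoin_simple_self F
              (RatFunc.X ^ p ^ a + RatFunc.X ^ 2)⟩ :
          ↥F⟮(RatFunc.X ^ p ^ a + RatFunc.X ^ 2 : RatFunc F)⟯))) :=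
  stmt_11_general p a hodd F hF
end
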